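/- Let I ⊆ ℝ be an open interval, V₀ : I → ℝ differentiable, ε ∈ ℝ, and u : I → ℝ twice differentiable with u > 0 on I and −½u'' + V₀u = εu on I. Set κ = u'/u and V₁ = V₀ − κ' (= V₀ − (log u)''). Let E ∈ ℝ and let ψ : I → ℝ be twice differentiable with −½ψ'' + V₀ψ = Eψ on I. Then the function φ = (−ψ' + κψ)/√2 is twice differentiable on I and satisfies −½φ'' + V₁φ = Eφ on I. -/
import Mathlib


open Filter Real Topology

/-- first-order Darboux/SUSY transformation. If `u > 0` solves
`-½u'' + V₀u = εu` on the open interval `I`, `κ = u'/u`, `V₁ = V₀ - κ'`, and `ψ` solves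
`-½ψ'' + V₀ψ = Eψ` on `I`, then `φ = (-ψ' + κψ)/√2` is twice differentiable on `I` and
solves `-½φ'' + V₁φ = Eφ` on `I`. -/
theorem statement8 (I : Set ℝ) (hIopen : IsOpen I) (hIconn : I.OrdConnected)
    (V₀ : ℝ → ℝ) (hV₀ : ∀ x ∈ I, DifferentiableAt ℝ V₀ x)
    (ε : ℝ) (u : ℝ → ℝ)
    (hu : ∀ x ∈ I, DifferentiableAt ℝ u x ∧ DifferentiableAt ℝ (deriv u) x)
    (hupos : ∀ x ∈ I, 0 < u x)
    (hueq : ∀ x ∈ I, -(1 / 2) * deriv (deriv u) x + V₀ x * u x = ε * u x)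
    (κ : ℝ → ℝ) (hκ : κ = fun x => deriv u x / u x)
    (V₁ : ℝ → ℝ) (hV₁ : V₁ = fun x => V₀ x - deriv κ x)
    (E : ℝ) (ψ : ℝ → ℝ)
    (hψ : ∀ x ∈ I, DifferentiableAt ℝ ψ x ∧ DifferentiableAt ℝ (deriv ψ) x)
    (hψeq : ∀ x ∈ I, -(1 / 2) * deriv (deriv ψ) x + V₀ x * ψ x = E * ψ x)
    (φ : ℝ → ℝ) (hφ : φ = fun x => (-(deriv ψ x) + κ x * ψ x) / Real.sqrt 2) :
    ∀ x ∈ I, (DifferentiableAt ℝ φ x ∧ DifferentiableAt ℝ (deriv φ) x) ∧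
      -(1 / 2) * deriv (deriv φ) x + V₁ x * φ x = E * φ x := by
  intro x hx
  have hmem : I ∈ 𝓝 x := hIopen.mem_nhds hx
  -- basic facts on I
  have hune : ∀ y ∈ I, u y ≠ 0 := fun y hy => (hupos y hy).ne'
  have hκdiff : ∀ y ∈ I, DifferentiableAt ℝ κ y := by
    intro y hy
    rw [hκ]
    exact (hu y hy).2.div (hu y hy).1 (hune y hy)
  have hu'' : ∀ y ∈ I, deriv (deriv u) y = 2 * V₀ y * u y - 2 * ε * u y := by
    intro y hy; have := hueq y hy; linarith
  have hψ'' : ∀ y ∈ I, deriv (deriv ψ) y = 2 * V₀ y * ψ y - 2 * E * ψ y := by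
    intro y hy; have := hψeq y hy; linarith
  -- derivative of κ on I
  have hκ' : ∀ y ∈ I, deriv κ y =
      2 * V₀ y - 2 * ε - κ y ^ 2 := by
    intro y hy
    have h : HasDerivAt κ
        ((deriv (deriv u) y * u y - deriv u y * deriv u y) / (u y) ^ 2) y := by
      rw [hκ]
      exact (hu y hy).2.hasDerivAt.div (hu y hy).1.hasDerivAt (hune y hy)
    rw [h.deriv, hu'' y hy, hκ]
    have h0 := hune y hy
    field_simp
  -- derivative of φ on I
  have hφdiff : ∀ y ∈ I, DifferentiableAt ℝ φ y := by
    intro y hy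
    rw [hφ]
    exact (((hψ y hy).2.neg).add ((hκdiff y hy).mul (hψ y hy).1)).div_const _
  have hφ' : ∀ y ∈ I, deriv φ y =
      ((2 * E - 2 * ε) * ψ y - κ y ^ 2 * ψ y + κ y * deriv ψ y) / Real.sqrt 2 := by
    intro y hy
    have h : HasDerivAt φ
        ((-(deriv (deriv ψ) y) + (deriv κ y * ψ y + κ y * deriv ψ y)) / Real.sqrt 2) y := by
      rw [hφ]
      exact (((hψ y hy).2.hasDerivAt.neg).add
        (((hκdiff y hy).hasDerivAt).mul (hψ y hy).1.hasDerivAt)).div_const _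
    rw [h.deriv, hψ'' y hy, hκ' y hy]
    ring_nf
  -- φ' is eventually equal to a differentiable function G
  set G : ℝ → ℝ := fun y =>
    ((2 * E - 2 * ε) * ψ y - κ y ^ 2 * ψ y + κ y * deriv ψ y) / Real.sqrt 2 with hG
  have hEq : deriv φ =ᶠ[𝓝 x] G := by
    filter_upwards [hmem] with y hy using hφ' y hy
  have h1 : HasDerivAt (fun y => (2 * E - 2 * ε) * ψ y)
      ((2 * E - 2 * ε) * deriv ψ x) x := (hψ x hx).1.hasDerivAt.const_mul _
  have h2 : HasDerivAt (fun y => κ y ^ 2 * ψ y)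
      (((2:ℕ) * κ x ^ (2-1) * deriv κ x) * ψ x + κ x ^ 2 * deriv ψ x) x :=
    ((hκdiff x hx).hasDerivAt.pow 2).mul (hψ x hx).1.hasDerivAt
  have h3 : HasDerivAt (fun y => κ y * deriv ψ y)
      (deriv κ x * deriv ψ x + κ x * deriv (deriv ψ) x) x :=
    ((hκdiff x hx).hasDerivAt).mul (hψ x hx).2.hasDerivAt
  have hGhas : HasDerivAt G
      (((2 * E - 2 * ε) * deriv ψ x
        - (((2:ℕ) * κ x ^ (2-1) * deriv κ x) * ψ x + κ x ^ 2 * deriv ψ x)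
        + (deriv κ x * deriv ψ x + κ x * deriv (deriv ψ) x)) / Real.sqrt 2) x :=
    ((h1.sub h2).add h3).div_const _
  have hGdiff : DifferentiableAt ℝ (deriv φ) x :=
    (Filter.EventuallyEq.differentiableAt_iff hEq).mpr hGhas.differentiableAt
  refine ⟨⟨hφdiff x hx, hGdiff⟩, ?_⟩
  have hdd : deriv (deriv φ) x = deriv G x := hEq.deriv_eq
  rw [hdd, hGhas.deriv]
  simp only [hV₁, hφ]
  rw [hκ' x hx, hψ'' x hx]
  have h2 : Real.sqrt 2 ≠ 0 := by positivity
  field_simp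
  ring
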